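/- arXiv:1109.5594 — 2 statements merged into one kernel-verified Lean document; each statement's English description precedes it below -/
import Mathlib

section
/- Let 𝒵 be a finite set of integers, Z(α) = ∑_{n ∈ 𝒵} e(−αn), and f(α) = ∑_{m ∈ I} a_m e(αm²) with |a_m| ≤ 1 for m in an integer interval I ⊆ (x − x^θ, x + x^θ], x ≥ 2, 0 < θ < 1. Then ∫₀¹ |f(α)Z(α)|² dα equals the number of quadruples (m₁, m₂, n₁, n₂) with m₁² − n₁ = m₂² − n₂ weighted by a_{m₁}\overline{a_{m₂}}, and is bounded by |𝒵|·|I| + |𝒵|²·max_k #{m ∈ I : m² ≡ fixed value}, giving ∫₀¹ |f(α)Z(α)|² dα ≪ |𝒵|·x^θ + |𝒵|²·x^ε for any ε > 0. -/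
/-!
Expanding `|f Z|²` and integrating term by term, orthogonality of `e(αk)` bounds the integral by
the number of solutions of `m₁² - n₁ = m₂² - n₂` with `mᵢ ∈ I`, `nⱼ ∈ 𝒵`. For `n₁ = n₂` the
positivity of `I` forces `m₁ = m₂`, which gives `|𝒵| |I| ≤ |𝒵| (2 x^θ + 1)`, and the stray
`|𝒵|` is absorbed by `|𝒵|² x^ε`. For `n₁ ≠ n₂`, the divisor `m₁ - m₂` of
`n₁ - n₂ = (m₁ - m₂)(m₁ + m₂) ≠ 0` determines `(m₁, m₂)`, and `|n₁ - n₂| ≤ (2x)²`, so the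
divisor bound `τ(n) ≪ n^(ε/2)` leaves `≪ x^ε` solutions for each of the `|𝒵|²` pairs.
-/

open Finset Real

/-- The additive character `e(x) = exp(2πix)`. -/
noncomputable def eChar (x : ℝ) : ℂ := Complex.exp (2 * Real.pi * Complex.I * x)

lemma eChar_add (x y : ℝ) : eChar (x + y) = eChar x * eChar y := by
  simp only [eChar, Complex.ofReal_add, mul_add, Complex.exp_add]

lemma conj_eChar (x : ℝ) : starRingEnd ℂ (eChar x) = eChar (-x) := by
  rw [eChar, ← Complex.exp_conj, eChar]
  simp only [map_mul, Complex.conj_I, Complex.conj_ofReal, map_ofNat, Complex.ofReal_neg]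
  ring_nf

@[fun_prop]
lemma continuous_eChar : Continuous eChar := by
  unfold eChar; fun_prop

lemma integral_eChar_mul_intCast (k : ℤ) :
    ∫ α in (0:ℝ)..1, eChar (α * k) = if k = 0 then 1 else 0 := by
  split_ifs with hk
  · simp [hk, eChar]
  have hc : 2 * π * Complex.I * k ≠ 0 := by simp [Real.pi_ne_zero, hk]
  have hexp (α : ℝ) : eChar (α * k) = Complex.exp (2 * π * Complex.I * k * α) := by
    rw [eChar]; push_cast; ring_nf
  simp only [hexp, integral_exp_mul_complex hc, Complex.ofReal_one, mul_one, Complex.ofReal_zero,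
    mul_zero, Complex.exp_zero]
  rw [show 2 * π * Complex.I * k = k * (2 * π * Complex.I) by ring,
    Complex.exp_int_mul_two_pi_mul_I, sub_self, zero_div]

section Parseval

variable {ι : Type*}

lemma ofReal_norm_sq_sum_eChar (s : Finset ι) (c : ι → ℂ) (φ : ι → ℤ) (α : ℝ) :
    ((‖∑ i ∈ s, c i * eChar (α * φ i)‖ ^ 2 : ℝ) : ℂ) =
      ∑ i ∈ s, ∑ j ∈ s, c i * starRingEnd ℂ (c j) * eChar (α * (φ i - φ j : ℤ)) := by
  rw [Complex.ofReal_pow, ← Complex.mul_conj', map_sum, sum_mul_sum]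
  refine sum_congr rfl fun i _ => sum_congr rfl fun j _ => ?_
  rw [map_mul, conj_eChar, mul_mul_mul_comm, ← eChar_add]
  push_cast; ring_nf

lemma ofReal_integral_norm_sq_sum_eChar (s : Finset ι) (c : ι → ℂ) (φ : ι → ℤ) :
    ((∫ α in (0:ℝ)..1, ‖∑ i ∈ s, c i * eChar (α * φ i)‖ ^ 2 : ℝ) : ℂ) =
      ∑ i ∈ s, ∑ j ∈ s, if φ i = φ j then c i * starRingEnd ℂ (c j) else 0 := by
  have hint (i j : ι) : IntervalIntegrable
      (fun α : ℝ => c i * starRingEnd ℂ (c j) * eChar (α * (φ i - φ j : ℤ)))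
      MeasureTheory.volume 0 1 :=
    (by fun_prop : Continuous _).intervalIntegrable _ _
  rw [← intervalIntegral.integral_ofReal]
  simp_rw [ofReal_norm_sq_sum_eChar]
  rw [intervalIntegral.integral_finsetSum fun i _ =>
    (by fun_prop : Continuous _).intervalIntegrable _ _]
  refine sum_congr rfl fun i _ => ?_
  rw [intervalIntegral.integral_finsetSum fun j _ => hint i j]
  refine sum_congr rfl fun j _ => ?_
  rw [intervalIntegral.integral_const_mul, integral_eChar_mul_intCast]
  simp [sub_eq_zero]

lemma integral_norm_sq_sum_eChar_le_card (s : Finset ι) (c : ι → ℂ) (φ : ι → ℤ)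
    (hc : ∀ i ∈ s, ‖c i‖ ≤ 1) :
    ∫ α in (0:ℝ)..1, ‖∑ i ∈ s, c i * eChar (α * φ i)‖ ^ 2 ≤ #{p ∈ s ×ˢ s | φ p.1 = φ p.2} := by
  have hterm : ∀ i ∈ s, ∀ j ∈ s,
      ‖if φ i = φ j then c i * starRingEnd ℂ (c j) else 0‖ ≤ if φ i = φ j then (1 : ℝ) else 0 := by
    intro i hi j hj
    split_ifs
    · simpa using mul_le_one₀ (hc i hi) (norm_nonneg _) (hc j hj)
    · simp
  calc ∫ α in (0:ℝ)..1, ‖∑ i ∈ s, c i * eChar (α * φ i)‖ ^ 2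
      ≤ ‖((∫ α in (0:ℝ)..1, ‖∑ i ∈ s, c i * eChar (α * φ i)‖ ^ 2 : ℝ) : ℂ)‖ :=
        Complex.norm_real _ ▸ le_abs_self _
    _ ≤ ∑ i ∈ s, ∑ j ∈ s, if φ i = φ j then (1 : ℝ) else 0 := by
        rw [ofReal_integral_norm_sq_sum_eChar]
        exact (norm_sum_le _ _).trans <| sum_le_sum fun i hi =>
          (norm_sum_le _ _).trans <| sum_le_sum fun j hj => hterm i hi j hj
    _ = #{p ∈ s ×ˢ s | φ p.1 = φ p.2} := by
        rw [card_filter, sum_product]; push_cast; rfl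

end Parseval

lemma add_one_le_mul_pow {y : ℝ} (hy : 1 < y) (a : ℕ) :
    (a + 1 : ℝ) ≤ max 1 (1 / (y - 1)) * y ^ a := by
  have hy' : 0 < y - 1 := by linarith
  have hbern : 1 + a * (y - 1) ≤ y ^ a := by
    simpa using one_add_mul_le_pow (by linarith : (-2 : ℝ) ≤ y - 1) a
  refine le_trans ?_ (mul_le_mul_of_nonneg_left hbern (by positivity))
  rcases le_total 1 (y - 1) with h | h
  · rw [max_eq_left ((div_le_one hy').2 h)]; nlinarith
  · rw [max_eq_right ((one_le_div hy').2 h), div_mul_eq_mul_div, one_mul, le_div_iff₀ hy']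
    nlinarith

lemma card_divisors_le_prod_mul_rpow {ε : ℝ} (hε : 0 < ε) {n : ℕ} (hn : n ≠ 0) :
    (#n.divisors : ℝ) ≤ (∏ p ∈ n.primeFactors, max 1 (1 / ((p : ℝ) ^ ε - 1))) * n ^ ε := by
  have hn' : (n : ℝ) ^ ε = ∏ p ∈ n.primeFactors, ((p : ℝ) ^ ε) ^ n.factorization p := by
    conv_lhs => rw [← Nat.prod_factorization_pow_eq_self hn]
    rw [Finsupp.prod, Nat.support_factorization, Nat.cast_prod,
      ← Real.finsetProd_rpow _ _ fun p _ => by positivity]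
    refine prod_congr rfl fun p _ => ?_
    rw [Nat.cast_pow, ← Real.rpow_natCast, ← Real.rpow_natCast, ← Real.rpow_mul (by positivity),
      ← Real.rpow_mul (by positivity), mul_comm]
  rw [Nat.card_divisors hn, hn', ← prod_mul_distrib, Nat.cast_prod]
  refine prod_le_prod (fun _ _ => by positivity) fun p hp => ?_
  have hp : (1 : ℝ) < p := by exact_mod_cast (Nat.prime_of_mem_primeFactors hp).one_lt
  exact_mod_cast add_one_le_mul_pow (Real.one_lt_rpow hp hε) _

lemma exists_card_divisors_le_rpow {ε : ℝ} (hε : 0 < ε) :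
    ∃ C > 0, ∀ n : ℕ, n ≠ 0 → (#n.divisors : ℝ) ≤ C * n ^ ε := by
  set C₀ : ℝ := max 1 (1 / ((2 : ℝ) ^ ε - 1))
  set B : ℕ := ⌈(2 : ℝ) ^ (1 / ε)⌉₊
  have hC₀ : 1 ≤ C₀ := le_max_left _ _
  refine ⟨C₀ ^ B, by positivity, fun n hn => (card_divisors_le_prod_mul_rpow hε hn).trans ?_⟩
  refine mul_le_mul_of_nonneg_right ?_ (by positivity)
  -- only the primes below `2 ^ (1 / ε)` contribute a factor other than `1`
  have hfactor : ∀ p ∈ n.primeFactors,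
      max 1 (1 / ((p : ℝ) ^ ε - 1)) ≤ if p < B then C₀ else 1 := by
    intro p hp
    have hp : (2 : ℝ) ≤ p := by exact_mod_cast (Nat.prime_of_mem_primeFactors hp).two_le
    have h2ε : 1 < (2 : ℝ) ^ ε := Real.one_lt_rpow one_lt_two hε
    split_ifs with hpB
    · exact max_le_max le_rfl <| one_div_le_one_div_of_le (by linarith) <|
        by linarith [Real.rpow_le_rpow zero_le_two hp hε.le]
    · have hpε : 2 ≤ (p : ℝ) ^ ε := by
        calc (2 : ℝ) = ((2 : ℝ) ^ (1 / ε)) ^ ε := by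
              rw [← Real.rpow_mul zero_le_two, one_div_mul_cancel hε.ne', Real.rpow_one]
          _ ≤ (p : ℝ) ^ ε := by
              gcongr
              exact (Nat.le_ceil _).trans (by exact_mod_cast not_lt.1 hpB)
      exact max_le le_rfl ((div_le_one (by linarith)).2 (by linarith))
  calc ∏ p ∈ n.primeFactors, max 1 (1 / ((p : ℝ) ^ ε - 1))
      ≤ ∏ p ∈ n.primeFactors, if p < B then C₀ else 1 :=
        prod_le_prod (fun _ _ => by positivity) hfactor
    _ = C₀ ^ #{p ∈ n.primeFactors | p < B} := by rw [prod_ite, prod_const_one, mul_one, prod_const]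
    _ ≤ C₀ ^ B := by
        refine pow_le_pow_right₀ hC₀ ((card_le_card fun p hp => ?_).trans (card_range B).le)
        exact mem_range.2 (mem_filter.1 hp).2

lemma Int.card_divisors (z : ℤ) : #z.divisors = 2 * #z.natAbs.divisors := by
  rw [Int.divisors, card_disjUnion, card_map, card_map, two_mul]

lemma card_sq_sub_sq_eq_le_card_divisors (s : Finset ℤ) {d : ℤ} (hd : d ≠ 0) :
    #{m ∈ s ×ˢ s | m.1 ^ 2 - m.2 ^ 2 = d} ≤ #d.divisors := by
  refine card_le_card_of_injOn (fun m => m.1 - m.2) (fun m hm => ?_) fun m hm m' hm' heq => ?_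
  · rw [mem_coe, mem_filter] at hm
    exact Int.mem_divisors.2 ⟨⟨m.1 + m.2, by rw [← hm.2]; ring⟩, hd⟩
  · rw [mem_coe, mem_filter] at hm hm'
    simp only at heq
    have hsum : m.1 + m.2 = m'.1 + m'.2 := by
      refine mul_left_cancel₀ (a := m.1 - m.2) (fun h => hd ?_) ?_
      · rw [← hm.2]; linear_combination (m.1 + m.2) * h
      · linear_combination hm.2 - hm'.2 - (m'.1 + m'.2) * heq
    exact Prod.ext (by linarith) (by linarith)

lemma exists_card_sq_sub_sq_eq_le_rpow {ε : ℝ} (hε : 0 < ε) :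
    ∃ C > 0, ∀ (X : ℝ) (s : Finset ℤ), 0 ≤ X → (∀ m ∈ s, |(m : ℝ)| ≤ X) → ∀ d : ℤ, d ≠ 0 →
      (#{m ∈ s ×ˢ s | m.1 ^ 2 - m.2 ^ 2 = d} : ℝ) ≤ C * X ^ ε := by
  obtain ⟨C, hC, hdiv⟩ := exists_card_divisors_le_rpow (half_pos hε)
  refine ⟨2 * C, by positivity, fun X s hX hs d hd => ?_⟩
  rcases eq_empty_or_nonempty {m ∈ s ×ˢ s | m.1 ^ 2 - m.2 ^ 2 = d} with hempty | ⟨m, hm⟩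
  · rw [hempty, card_empty, Nat.cast_zero]; positivity
  rw [mem_filter, mem_product] at hm
  have hdX : (d.natAbs : ℝ) ≤ X ^ 2 := by
    have h₁ := sq_le_sq' (abs_le.1 (hs _ hm.1.1)).1 (abs_le.1 (hs _ hm.1.1)).2
    have h₂ := sq_le_sq' (abs_le.1 (hs _ hm.1.2)).1 (abs_le.1 (hs _ hm.1.2)).2
    rw [Nat.cast_natAbs, Int.cast_abs, ← hm.2, abs_le]
    push_cast
    constructor <;> nlinarith [sq_nonneg (m.1 : ℝ), sq_nonneg (m.2 : ℝ)]
  calc (#{m ∈ s ×ˢ s | m.1 ^ 2 - m.2 ^ 2 = d} : ℝ)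
      ≤ #d.divisors := by exact_mod_cast card_sq_sub_sq_eq_le_card_divisors s hd
    _ = 2 * #d.natAbs.divisors := by rw [Int.card_divisors]; push_cast; ring
    _ ≤ 2 * (C * (d.natAbs : ℝ) ^ (ε / 2)) := by gcongr; exact hdiv _ (Int.natAbs_ne_zero.2 hd)
    _ ≤ 2 * (C * (X ^ 2) ^ (ε / 2)) := by gcongr
    _ = 2 * C * X ^ ε := by
        rw [← Real.rpow_natCast_mul hX]; push_cast; ring_nf

lemma card_sq_sub_sq_eq_zero_le (s : Finset ℤ) (hs : ∀ m ∈ s, 0 < m) :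
    #{m ∈ s ×ˢ s | m.1 ^ 2 - m.2 ^ 2 = 0} ≤ #s := by
  refine card_le_card_of_injOn Prod.fst (fun m hm => (mem_product.1 (mem_filter.1 hm).1).1) ?_
  intro m hm m' hm' heq
  rw [mem_coe, mem_filter, mem_product, sub_eq_zero] at hm hm'
  have hsnd (m : ℤ × ℤ) (hm : (m.1 ∈ s ∧ m.2 ∈ s) ∧ m.1 ^ 2 = m.2 ^ 2) : m.2 = m.1 :=
    ((pow_left_inj₀ (hs _ hm.1.1).le (hs _ hm.1.2).le two_ne_zero).1 hm.2).symm
  exact Prod.ext heq (by rw [hsnd m hm, hsnd m' hm', heq])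

lemma card_energy_le_sum_card {ι G : Type*} [DecidableEq ι] [AddCommGroup G] [DecidableEq G]
    (s : Finset ι) (t : Finset G) (f : ι → G) :
    #{pq ∈ (s ×ˢ t) ×ˢ (s ×ˢ t) | f pq.1.1 - pq.1.2 = f pq.2.1 - pq.2.2} ≤
      ∑ n ∈ t ×ˢ t, #{m ∈ s ×ˢ s | f m.1 - f m.2 = n.1 - n.2} := by
  rw [card_eq_sum_card_fiberwise (f := fun pq => (pq.1.2, pq.2.2)) (t := t ×ˢ t)
    fun pq hpq => by simp_all]
  refine sum_le_sum fun n _ => card_le_card_of_injOn (fun pq => (pq.1.1, pq.2.1)) ?_ ?_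
  · intro pq hpq
    simp only [coe_filter, mem_filter, mem_product, Set.mem_ofPred_eq] at hpq ⊢
    obtain ⟨⟨⟨⟨h₁, -⟩, h₂, -⟩, heq⟩, rfl⟩ := hpq
    exact ⟨⟨h₁, h₂⟩, by rwa [sub_eq_sub_iff_sub_eq_sub] at heq⟩
  · intro pq hpq pq' hpq' heq
    rw [mem_coe, mem_filter] at hpq hpq'
    have hfiber := hpq.2.trans hpq'.2.symm
    simp only [Prod.mk.injEq] at hfiber heq
    exact Prod.ext (Prod.ext heq.1 hfiber.1) (Prod.ext heq.2 hfiber.2)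

lemma card_le_of_forall_mem_Ioc (s : Finset ℤ) {a b : ℝ} (hab : a ≤ b)
    (hs : ∀ m ∈ s, a < m ∧ m ≤ b) : (#s : ℝ) ≤ b - a + 1 := by
  have hsub : s ⊆ Ioc ⌊a⌋ ⌊b⌋ := fun m hm =>
    mem_Ioc.2 ⟨Int.floor_lt.2 (hs m hm).1, Int.le_floor.2 (hs m hm).2⟩
  have hcard : (#s : ℤ) ≤ ⌊b⌋ - ⌊a⌋ := by
    rw [← Int.card_Ioc_of_le _ _ (Int.floor_mono hab)]
    exact_mod_cast card_le_card hsub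
  have h := (Int.cast_le (R := ℝ)).2 hcard
  push_cast at h
  linarith [Int.floor_le b, Int.lt_floor_add_one a]

lemma sum_card_sq_sub_sq_eq_le (I Z : Finset ℤ) (hI : ∀ m ∈ I, 0 < m) {K : ℝ}
    (hK : ∀ d : ℤ, d ≠ 0 → (#{m ∈ I ×ˢ I | m.1 ^ 2 - m.2 ^ 2 = d} : ℝ) ≤ K) :
    ∑ n ∈ Z ×ˢ Z, (#{m ∈ I ×ˢ I | m.1 ^ 2 - m.2 ^ 2 = n.1 - n.2} : ℝ) ≤
      #Z * #I + #Z ^ 2 * K := by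
  have hK₀ : 0 ≤ K := (Nat.cast_nonneg _).trans (hK 1 one_ne_zero)
  calc ∑ n ∈ Z ×ˢ Z, (#{m ∈ I ×ˢ I | m.1 ^ 2 - m.2 ^ 2 = n.1 - n.2} : ℝ)
      ≤ ∑ n ∈ Z ×ˢ Z, ((if n.1 = n.2 then (#I : ℝ) else 0) + K) := by
        refine sum_le_sum fun n _ => ?_
        split_ifs with hn
        · rw [hn, sub_self]
          exact le_add_of_le_of_nonneg (by exact_mod_cast card_sq_sub_sq_eq_zero_le I hI) hK₀
        · exact (hK _ (sub_ne_zero.2 hn)).trans (by linarith)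
    _ = #Z * #I + #Z ^ 2 * K := by
        rw [sum_add_distrib, sum_product, sum_const, card_product]
        simp_rw [sum_ite_eq, sum_ite_mem, inter_self, sum_const, nsmul_eq_mul]
        push_cast; ring

lemma sum_eChar_sq_mul_sum_eChar_neg (I Z : Finset ℤ) (a : ℤ → ℂ) (α : ℝ) :
    (∑ m ∈ I, a m * eChar (α * (m : ℝ) ^ 2)) * (∑ n ∈ Z, eChar (-(α * (n : ℝ)))) =
      ∑ p ∈ I ×ˢ Z, a p.1 * eChar (α * ((p.1 ^ 2 - p.2 : ℤ) : ℝ)) := by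
  rw [sum_mul_sum, sum_product]
  refine sum_congr rfl fun m _ => sum_congr rfl fun n _ => ?_
  rw [mul_assoc, ← eChar_add]; push_cast; ring_nf

theorem mean_value_fZ_bound_general (ε θ : ℝ) (hε : 0 < ε) (hθ₁ : θ < 1) :
    ∃ C : ℝ, 0 < C ∧ ∀ (x : ℝ) (Z I : Finset ℤ) (a : ℤ → ℂ),
      2 ≤ x →
      (∀ m ∈ I, x - x ^ θ < (m : ℝ) ∧ (m : ℝ) ≤ x + x ^ θ) →
      (∀ m, ‖a m‖ ≤ 1) →
      ∫ α in (0:ℝ)..1,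
          ‖(∑ m ∈ I, a m * eChar (α * (m : ℝ) ^ 2)) *
            (∑ n ∈ Z, eChar (-(α * (n : ℝ))))‖ ^ 2 ≤
        C * ((Z.card : ℝ) * x ^ θ + (Z.card : ℝ) ^ 2 * x ^ ε) := by
  obtain ⟨C, hC, hcount⟩ := exists_card_sq_sub_sq_eq_le_rpow hε
  refine ⟨3 + C * 2 ^ ε, by positivity, fun x Z I a hx hI ha => ?_⟩
  have hxθ : x ^ θ < x := Real.rpow_lt_self_of_one_lt (by linarith) hθ₁
  have hxθ₀ : 0 ≤ x ^ θ := Real.rpow_nonneg (by linarith) θ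
  have hIpos (m : ℤ) (hm : m ∈ I) : 0 < m := by exact_mod_cast (by linarith [hI m hm] : (0 : ℝ) < m)
  have hIabs (m : ℤ) (hm : m ∈ I) : |(m : ℝ)| ≤ 2 * x :=
    abs_le.2 ⟨by linarith [hI m hm], by linarith [hI m hm]⟩
  have hIcard : (#I : ℝ) ≤ 2 * x ^ θ + 1 := by
    linarith [card_le_of_forall_mem_Ioc I (by linarith) hI]
  have hZ : (#Z : ℝ) ≤ #Z ^ 2 * x ^ ε := by
    have : (#Z : ℝ) ≤ #Z ^ 2 := by exact_mod_cast Nat.le_self_pow two_ne_zero _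
    nlinarith [Real.one_le_rpow (by linarith : 1 ≤ x) hε.le]
  simp_rw [sum_eChar_sq_mul_sum_eChar_neg]
  calc _ ≤ (#{pq ∈ (I ×ˢ Z) ×ˢ (I ×ˢ Z) | pq.1.1 ^ 2 - pq.1.2 = pq.2.1 ^ 2 - pq.2.2} : ℝ) :=
        integral_norm_sq_sum_eChar_le_card (I ×ˢ Z) (fun p => a p.1) (fun p => p.1 ^ 2 - p.2)
          fun p _ => ha p.1
    _ ≤ ∑ n ∈ Z ×ˢ Z, (#{m ∈ I ×ˢ I | m.1 ^ 2 - m.2 ^ 2 = n.1 - n.2} : ℝ) := by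
        exact_mod_cast card_energy_le_sum_card I Z fun m : ℤ => m ^ (2 : ℕ)
    _ ≤ #Z * #I + #Z ^ 2 * (C * (2 * x) ^ ε) :=
        sum_card_sq_sub_sq_eq_le I Z hIpos (hcount _ I (by linarith) hIabs)
    _ ≤ (3 + C * 2 ^ ε) * (#Z * x ^ θ + #Z ^ 2 * x ^ ε) := by
        rw [Real.mul_rpow zero_le_two (by linarith)]
        have hA : 0 ≤ C * 2 ^ ε * (#Z * x ^ θ) := by positivity
        nlinarith [mul_le_mul_of_nonneg_left hIcard (Nat.cast_nonneg (α := ℝ) #Z)]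

/-- Wooley's mean-value bound (inequality (3.2)): for any `ε, θ`, there is `C` such that
for `Z(α) = ∑_{n ∈ 𝒵} e(−αn)` and `f(α) = ∑_{m ∈ I} a_m e(αm²)` with `|a_m| ≤ 1` and
`I ⊆ (x − x^θ, x + x^θ]`, one has
`∫₀¹ |f(α)Z(α)|² dα ≤ C(|𝒵| x^θ + |𝒵|² x^ε)`. -/
theorem mean_value_fZ_bound (ε θ : ℝ) (hε : 0 < ε) (hθ₀ : 0 < θ) (hθ₁ : θ < 1) :
    ∃ C : ℝ, 0 < C ∧ ∀ (x : ℝ) (Z I : Finset ℤ) (a : ℤ → ℂ),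
      2 ≤ x →
      (∀ m ∈ I, x - x ^ θ < (m : ℝ) ∧ (m : ℝ) ≤ x + x ^ θ) →
      (∀ m, ‖a m‖ ≤ 1) →
      ∫ α in (0:ℝ)..1,
          ‖(∑ m ∈ I, a m * eChar (α * (m : ℝ) ^ 2)) *
            (∑ n ∈ Z, eChar (-(α * (n : ℝ))))‖ ^ 2 ≤
        C * ((Z.card : ℝ) * x ^ θ + (Z.card : ℝ) ^ 2 * x ^ ε) :=
  mean_value_fZ_bound_general ε θ hε hθ₁
end

section
/- Suppose X is large, θ ∈ (8/9, 1), and suppose that every integer m ≡ 4 (mod 24) with |m − X| ≤ X^{θ/2}·X^{1/2}, outside an exceptional set of size at most X^{(16−11θ)/14+ε}, can be written as m = p₁² + p₂² + p₃² + p₄² with |pⱼ − (X/4)^{1/2}| ≤ X^{θ/2}. Suppose moreover n ≡ 5 (mod 24), X = 4n/5, H = X^{θ/2}, and the number of primes p with |p − (n/5)^{1/2}| < H/2 exceeds X^{(16−11θ)/14+ε}. Then n = p² + p₁² + p₂² + p₃² + p₄² for some primes with |p − (n/5)^{1/2}| < H/2 and |pⱼ − (n/5)^{1/2}| < C·H for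 an absolute constant C. -/
open Finset Real

lemma sq_mod24 (p : ℕ) (h2 : ¬ 2 ∣ p) (h3 : ¬ 3 ∣ p) : p ^ 2 % 24 = 1 := by
  have h : p ^ 2 % 24 = (p % 24) ^ 2 % 24 := by rw [Nat.pow_mod]
  rw [h]
  have h2' : ¬ 2 ∣ p % 24 := fun hd => h2 ((Nat.dvd_mod_iff (by norm_num)).mp hd)
  have h3' : ¬ 3 ∣ p % 24 := fun hd => h3 ((Nat.dvd_mod_iff (by norm_num)).mp hd)
  have hlt : p % 24 < 24 := Nat.mod_lt _ (by norm_num)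
  interval_cases h : p % 24 <;> simp_all <;> omega

/-- Deduction of Theorem 1 from Theorem 2: if almost all `m ≡ 4 (mod 24)` near `X`
are sums of four almost-equal prime squares (with exceptional set of size
`≤ X^{(16−11θ)/14+ε}`), and `n ≡ 5 (mod 24)` with `X = 4n/5` has more primes `p`
with `|p − √(n/5)| < H/2` than the exceptional set size, then `n` is a sum of five
almost-equal prime squares. -/
theorem five_squares_from_four (θ ε : ℝ) (hθ₁ : 8 / 9 < θ) (hθ₂ : θ < 1) (hε : 0 < ε) :
    ∃ C X₀ : ℝ, 0 < C ∧ ∀ (X H : ℝ) (n : ℕ) (E : Finset ℕ),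
      X₀ ≤ X → X = 4 * (n : ℝ) / 5 → H = X ^ (θ / 2) →
      (E.card : ℝ) ≤ X ^ ((16 - 11 * θ) / 14 + ε) →
      (∀ m : ℕ, m ∉ E → m % 24 = 4 → |(m : ℝ) - X| ≤ X ^ (θ / 2) * X ^ ((1 : ℝ) / 2) →
        ∃ p₁ p₂ p₃ p₄ : ℕ, p₁.Prime ∧ p₂.Prime ∧ p₃.Prime ∧ p₄.Prime ∧
          m = p₁ ^ 2 + p₂ ^ 2 + p₃ ^ 2 + p₄ ^ 2 ∧
          |(p₁ : ℝ) - Real.sqrt (X / 4)| ≤ H ∧ |(p₂ : ℝ) - Real.sqrt (X / 4)| ≤ H ∧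
          |(p₃ : ℝ) - Real.sqrt (X / 4)| ≤ H ∧ |(p₄ : ℝ) - Real.sqrt (X / 4)| ≤ H) →
      n % 24 = 5 →
      X ^ ((16 - 11 * θ) / 14 + ε) <
        (((Finset.range n).filter
          (fun p : ℕ => p.Prime ∧ |(p : ℝ) - Real.sqrt ((n : ℝ) / 5)| < H / 2)).card : ℝ) →
      ∃ p p₁ p₂ p₃ p₄ : ℕ, p.Prime ∧ p₁.Prime ∧ p₂.Prime ∧ p₃.Prime ∧ p₄.Prime ∧
        n = p ^ 2 + p₁ ^ 2 + p₂ ^ 2 + p₃ ^ 2 + p₄ ^ 2 ∧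
        |(p : ℝ) - Real.sqrt ((n : ℝ) / 5)| < H / 2 ∧
        |(p₁ : ℝ) - Real.sqrt ((n : ℝ) / 5)| < C * H ∧
        |(p₂ : ℝ) - Real.sqrt ((n : ℝ) / 5)| < C * H ∧
        |(p₃ : ℝ) - Real.sqrt ((n : ℝ) / 5)| < C * H ∧
        |(p₄ : ℝ) - Real.sqrt ((n : ℝ) / 5)| < C * H := by
  have hθ0 : 0 < θ := by linarith
  have h1θ : 0 < 1 - θ := by linarith
  refine ⟨2, max ((2:ℝ) ^ ((2:ℝ)/(1-θ))) ((8:ℝ) ^ ((2:ℝ)/θ)), by norm_num, ?_⟩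
  intro X H n E hX₀ hXn hH hEcard h4 hn24 hScard
  -- basic positivity
  have hX1 : (1:ℝ) ≤ X := by
    have : (1:ℝ) ≤ (8:ℝ) ^ ((2:ℝ)/θ) := Real.one_le_rpow (by norm_num) (by positivity)
    calc (1:ℝ) ≤ (8:ℝ) ^ ((2:ℝ)/θ) := this
      _ ≤ _ := le_trans (le_max_right _ _) hX₀
  have hXpos : 0 < X := by linarith
  -- H ≥ 8
  have hH8 : (8:ℝ) ≤ H := by
    rw [hH]
    calc (8:ℝ) = ((8:ℝ) ^ ((2:ℝ)/θ)) ^ (θ/2) := by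
          rw [← Real.rpow_mul (by norm_num),
            show (2:ℝ)/θ * (θ/2) = 1 by field_simp, Real.rpow_one]
      _ ≤ X ^ (θ/2) :=
          Real.rpow_le_rpow (by positivity) (le_trans (le_max_right _ _) hX₀) (by positivity)
  have hHpos : 0 < H := by linarith
  -- √X ≥ 2H
  have hsqrt_rpow : Real.sqrt X = X ^ ((1:ℝ)/2) := Real.sqrt_eq_rpow X
  have h2H : 2 * H ≤ Real.sqrt X := by
    have key : (2:ℝ) ≤ X ^ ((1-θ)/2) := by
      calc (2:ℝ) = ((2:ℝ) ^ ((2:ℝ)/(1-θ))) ^ ((1-θ)/2) := by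
            rw [← Real.rpow_mul (by norm_num),
              show (2:ℝ)/(1-θ) * ((1-θ)/2) = 1 by field_simp, Real.rpow_one]
        _ ≤ X ^ ((1-θ)/2) :=
            Real.rpow_le_rpow (by positivity) (le_trans (le_max_left _ _) hX₀) (by positivity)
    have : X ^ ((1:ℝ)/2) = X ^ ((1-θ)/2) * X ^ (θ/2) := by
      rw [← Real.rpow_add hXpos]; ring_nf
    rw [hsqrt_rpow, this, hH]
    have hXθ : 0 < X ^ (θ/2) := by positivity
    nlinarith
  have hHsX : H ≤ Real.sqrt X := by linarith
  have hsX : Real.sqrt X ^ 2 = X := Real.sq_sqrt (le_of_lt hXpos)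
  -- s = √(n/5) = √(X/4) = √X / 2
  have hn5 : (n:ℝ)/5 = X/4 := by rw [hXn]; ring
  set s := Real.sqrt ((n:ℝ)/5) with hs
  have hsval : s = Real.sqrt X / 2 := by
    rw [hs, hn5, show X/4 = X * (1/2)^2 by ring, Real.sqrt_mul hXpos.le,
      Real.sqrt_sq (by norm_num : (0:ℝ) ≤ 1/2)]
    ring
  -- facts about members of S
  set S := (Finset.range n).filter
      (fun p : ℕ => p.Prime ∧ |(p : ℝ) - s| < H / 2) with hSdef
  have hnX : (n:ℝ) = 5 * X / 4 := by rw [hXn]; ring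
  have hs2 : s ^ 2 = (n:ℝ)/5 := Real.sq_sqrt (by positivity)
  have hmem : ∀ p ∈ S, p.Prime ∧ |(p : ℝ) - s| < H / 2 := by
    intro p hp
    exact (Finset.mem_filter.mp hp).2
  have hfacts : ∀ p ∈ S, 3 < p ∧ p ^ 2 ≤ n := by
    intro p hp
    obtain ⟨hpp, hps⟩ := hmem p hp
    have h1 : (p:ℝ) > s - H/2 := by
      have := abs_lt.mp hps; linarith [this.1]
    have h2 : (p:ℝ) < s + H/2 := by
      have := abs_lt.mp hps; linarith [this.2]
    have hsH : H ≤ s := by rw [hsval]; linarith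
    constructor
    · have : (3:ℝ) < (p:ℝ) := by linarith
      exact_mod_cast this
    · have hub : (p:ℝ) ^ 2 < (s + H/2) ^ 2 := by
        have hp0 : (0:ℝ) ≤ p := Nat.cast_nonneg p
        nlinarith
    -- (s + H/2)^2 = s^2 + s*H + H^2/4 ≤ n/5 + X/4 + X/16 ≤ n
      have hsX0 : 0 ≤ Real.sqrt X := Real.sqrt_nonneg X
      have hsH2 : s * H ≤ X / 4 := by
        rw [hsval]
        have h1 : H ≤ Real.sqrt X / 2 := by linarith only [h2H]
        calc Real.sqrt X / 2 * H ≤ Real.sqrt X / 2 * (Real.sqrt X / 2) :=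
              mul_le_mul_of_nonneg_left h1 (by positivity)
          _ = Real.sqrt X ^ 2 / 4 := by ring
          _ = X / 4 := by rw [hsX]
      have hH2 : H ^ 2 ≤ X := by
        calc H ^ 2 ≤ Real.sqrt X ^ 2 := by
              apply pow_le_pow_left₀ (le_of_lt hHpos) hHsX
          _ = X := hsX
      have hexp : (s + H/2) ^ 2 = s^2 + s*H + H^2/4 := by ring
      have : (p:ℝ) ^ 2 ≤ (n:ℝ) := by
        linarith only [hub, hexp, hs2, hsH2, hH2, hnX, hXpos]
      exact_mod_cast this
  -- pigeonhole: some p ∈ S with n - p^2 ∉ E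
  have hcards : E.card < S.card := by
    have : (E.card : ℝ) < (S.card : ℝ) := lt_of_le_of_lt hEcard hScard
    exact_mod_cast this
  have hexists : ∃ p ∈ S, n - p ^ 2 ∉ E := by
    by_contra hcon
    push_neg at hcon
    have hsub : S.image (fun p => n - p ^ 2) ⊆ E := by
      intro m hm
      obtain ⟨p, hp, rfl⟩ := Finset.mem_image.mp hm
      exact hcon p hp
    have hinj : Set.InjOn (fun p => n - p ^ 2) S := by
      intro a ha b hb hab
      have ha2 := (hfacts a ha).2
      have hb2 := (hfacts b hb).2
      simp only at hab
      have : a ^ 2 = b ^ 2 := by omega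
      exact Nat.pow_left_injective (by norm_num) this
    have := Finset.card_le_card hsub
    rw [Finset.card_image_of_injOn hinj] at this
    omega
  obtain ⟨p, hpS, hpE⟩ := hexists
  obtain ⟨hpp, hps⟩ := hmem p hpS
  obtain ⟨hp3, hp2n⟩ := hfacts p hpS
  set m := n - p ^ 2 with hm
  -- m ≡ 4 mod 24
  have hp24 : p ^ 2 % 24 = 1 := by
    apply sq_mod24
    · intro h2
      rcases (Nat.Prime.eq_one_or_self_of_dvd hpp 2 h2) with h | h <;> omega
    · intro h3
      rcases (Nat.Prime.eq_one_or_self_of_dvd hpp 3 h3) with h | h <;> omega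
  have hm24 : m % 24 = 4 := by omega
  -- |m - X| bound
  have hmcast : (m : ℝ) = (n:ℝ) - (p:ℝ)^2 := by
    rw [hm]
    push_cast [hp2n]
    ring
  have hmX : |(m : ℝ) - X| ≤ X ^ (θ/2) * X ^ ((1:ℝ)/2) := by
    have habs := abs_lt.mp hps
    have hub : (p:ℝ) < s + H/2 := by linarith only [habs.2]
    have hp0 : (0:ℝ) ≤ p := Nat.cast_nonneg p
    have key : |(m:ℝ) - X| = |s - p| * (s + p) := by
      rw [hmcast, hXn]
      have : (n:ℝ) - (p:ℝ)^2 - 4*(n:ℝ)/5 = (s - p) * (s + p) := by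
        linear_combination -hs2
      have hsp : (0:ℝ) ≤ s + p := add_nonneg (hs ▸ Real.sqrt_nonneg _) hp0
      rw [this, abs_mul, abs_of_nonneg hsp]
    rw [key, ← hsqrt_rpow, ← hH]
    have h1 : |s - (p:ℝ)| ≤ H/2 := by
      rw [abs_sub_comm]; linarith only [le_of_lt hps]
    have h2 : s + (p:ℝ) ≤ 2 * Real.sqrt X := by
      rw [hsval] at hub ⊢
      linarith only [hub, hHsX, hHpos]
    calc |s - (p:ℝ)| * (s + p) ≤ (H/2) * (2 * Real.sqrt X) := by
          apply mul_le_mul h1 h2 (by positivity) (by positivity)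
      _ = H * Real.sqrt X := by ring
  -- apply the four-squares hypothesis
  obtain ⟨p₁, p₂, p₃, p₄, hp₁, hp₂, hp₃, hp₄, hmsum, hb₁, hb₂, hb₃, hb₄⟩ :=
    h4 m hpE hm24 hmX
  have hX4 : Real.sqrt (X/4) = s := by rw [hs, hn5]
  rw [hX4] at hb₁ hb₂ hb₃ hb₄
  refine ⟨p, p₁, p₂, p₃, p₄, hpp, hp₁, hp₂, hp₃, hp₄, by omega, hps, ?_, ?_, ?_, ?_⟩ <;>
    · linarith only [hb₁, hb₂, hb₃, hb₄, hHpos]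
end
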